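/- arXiv:1106.4685 — 2 statements merged into one kernel-verified Lean document; each statement's English description precedes it below -/
import Mathlib

section
/- For every finite planar rooted tree Γ, the relation ⪯ on the set L(Γ) of leaves of Γ — defined by l₁ ⪯ l₂ iff l₁ = l₂ or there exists a subroot v ∈ R(Γ) with l₂ = m(v) and l₁ → v — is a partial order (reflexive, antisymmetric and transitive). -/
/-- A finite planar rooted tree in which every internal vertex has at least two
children: a vertex is either a leaf, or a node with children `a :: b :: r`
(ordered from left to right). -/
inductive PTree : Type
  | leaf : PTree
  | node : PTree → PTree → List PTree → PTree

namespace PTree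

/-- The ordered list of children (subtrees) of the root. -/
def childrenL : PTree → List PTree
  | leaf => []
  | node a b r => a :: b :: r

/-- The subtree at a given path (a vertex is encoded by the list of child indices,
read from the root). -/
def subtreeAt : List ℕ → PTree → Option PTree
  | [], t => some t
  | i :: p, t =>
      match (childrenL t)[i]? with
      | some c => subtreeAt p c
      | none => none

/-- `p` is a vertex of `t`. -/
def IsVertex (t : PTree) (p : List ℕ) : Prop := (subtreeAt p t).isSome

/-- `p` is a leaf of `t`. -/
def IsLeafV (t : PTree) (p : List ℕ) : Prop := subtreeAt p t = some leaf

/-- `p` is an internal vertex of `t`. -/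
def IsInternalV (t : PTree) (p : List ℕ) : Prop :=
  ∃ a b r, subtreeAt p t = some (node a b r)

/-- The number of children of the vertex `p`. -/
def childCount (t : PTree) (p : List ℕ) : ℕ :=
  ((subtreeAt p t).map fun s => (childrenL s).length).getD 0

/-- The rightmost edge out of the internal vertex `p`, i.e. the edge joining `p` to its
last child `q` (edges are directed towards the root, so the edge is `q → p`). -/
def Redge (t : PTree) (p q : List ℕ) : Prop :=
  IsInternalV t p ∧ q = p ++ [childCount t p - 1] ∧ IsVertex t q

/-- The vertex set `B` is connected through rightmost edges of `t` lying inside `B`. -/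
def ConnB (t : PTree) (B : Set (List ℕ)) : Prop :=
  ∀ p ∈ B, ∀ q ∈ B,
    Relation.ReflTransGen (fun x y => (Redge t x y ∨ Redge t y x) ∧ x ∈ B ∧ y ∈ B) p q

/-- `B` is (the vertex set of) a rightmost branch of `t`: a maximal connected subgraph
all of whose edges are rightmost edges of `t`. -/
def IsRBranch (t : PTree) (B : Set (List ℕ)) : Prop :=
  B.Nonempty ∧ (∀ p ∈ B, IsVertex t p) ∧ ConnB t B ∧
    ∀ B', B ⊆ B' → (∀ p ∈ B', IsVertex t p) → ConnB t B' → B' = B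

/-- A rightmost branch is nontrivial if it has at least two vertices. -/
def NontrivB (B : Set (List ℕ)) : Prop := ∃ p ∈ B, ∃ q ∈ B, p ≠ q

/-- `v` is the vertex of `B` nearest to the root. -/
def IsTop (B : Set (List ℕ)) (v : List ℕ) : Prop :=
  v ∈ B ∧ ∀ u ∈ B, v.length ≤ u.length

/-- `v` is a subroot of `t`: the vertex of a nontrivial rightmost branch nearest to
the root. -/
def IsSubroot (t : PTree) (v : List ℕ) : Prop :=
  ∃ B, IsRBranch t B ∧ NontrivB B ∧ IsTop B v

/-- One step towards `m(v)`: pass to the last child. -/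
def mstep (t : PTree) (v : List ℕ) : List ℕ := v ++ [childCount t v - 1]

/-- Auxiliary fuelled recursion computing `m(v)`. -/
def mpathAux (t : PTree) : ℕ → List ℕ → List ℕ
  | 0, v => v
  | n + 1, v => if childCount t v = 0 then v else mpathAux t n (mstep t v)

/-- The leaf `m(v)` reached from the vertex `v` by repeatedly passing to the last
child (the fuel `sizeOf t` is larger than the height of `t`, so the iteration always
reaches the leaf). -/
noncomputable def mpath (t : PTree) (v : List ℕ) : List ℕ := mpathAux t (sizeOf t) v

/-- `d(v)`: the number of edges on the path from `v` to `m(v)`. -/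
noncomputable def dd (t : PTree) (v : List ℕ) : ℕ := (mpath t v).length - v.length

/-- The number of leaves of `t`. -/
noncomputable def numLeavesP (t : PTree) : ℕ := {p | IsLeafV t p}.ncard

/-- The partial order `⪯` on the leaves of `t`: `l₁ ⪯ l₂` iff `l₁ = l₂` or there is a
subroot `v` with `l₂ = m(v)` and `l₁ → v` (i.e. `v` lies on the path from `l₁` to the
root, i.e. `v` is a prefix of `l₁`). -/
def leafLe (t : PTree) (l₁ l₂ : List ℕ) : Prop :=
  l₁ = l₂ ∨ ∃ v, IsSubroot t v ∧ l₂ = mpath t v ∧ v <+: l₁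

/-- `t` is a binary tree: every internal vertex has exactly two children. -/
def IsBinary (t : PTree) : Prop := ∀ p, IsInternalV t p → childCount t p = 2

end PTree
namespace PTree

lemma subtreeAt_append (p q : List ℕ) (t : PTree) :
    subtreeAt (p ++ q) t = (subtreeAt p t).bind (fun s => subtreeAt q s) := by
  induction p generalizing t with
  | nil => simp [subtreeAt]
  | cons i p ih =>
    simp only [List.cons_append, subtreeAt]
    cases h : (childrenL t)[i]? with
    | none => simp
    | some c => simp [ih]

lemma childCount_eq (v : List ℕ) (t s : PTree) (h : subtreeAt v t = some s) :
    childCount t v = (childrenL s).length := by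
  simp [childCount, h]

lemma sizeOf_mem_children {s c : PTree} (h : c ∈ childrenL s) : sizeOf c < sizeOf s := by
  cases s with
  | leaf => simp [childrenL] at h
  | node a b r =>
    simp only [childrenL, List.mem_cons] at h
    rcases h with rfl | rfl | h
    · simp; omega
    · simp; omega
    · have := List.sizeOf_lt_of_mem h
      simp; omega

lemma sizeOf_subtree {v : List ℕ} {t s : PTree} (h : subtreeAt v t = some s) :
    sizeOf s ≤ sizeOf t := by
  induction v generalizing t with
  | nil =>
    simp only [subtreeAt, Option.some.injEq] at h
    subst h; exact le_rfl
  | cons i p ih =>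
    simp only [subtreeAt] at h
    cases hc : (childrenL t)[i]? with
    | none => simp [hc] at h
    | some c =>
      rw [hc] at h
      obtain ⟨hic, hce⟩ := List.getElem?_eq_some_iff.mp hc
      have hm : c ∈ childrenL t := hce ▸ List.getElem_mem _
      have := sizeOf_mem_children hm
      have := ih h
      omega

/-- If `childCount t v > 0`, the subtree at `v` is a node, the subtree at
`mstep t v` is its last child, which is strictly smaller. -/
lemma mstep_subtree {v : List ℕ} {t s : PTree} (h : subtreeAt v t = some s)
    (hc : childCount t v ≠ 0) :
    ∃ c, subtreeAt (mstep t v) t = some c ∧ sizeOf c < sizeOf s := by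
  have hcc := childCount_eq v t s h
  have hlen : 0 < (childrenL s).length := by omega
  have hget : (childrenL s)[(childrenL s).length - 1]? = some ((childrenL s)[(childrenL s).length - 1]'(by omega)) := by
    exact List.getElem?_eq_getElem (by omega)
  refine ⟨(childrenL s)[(childrenL s).length - 1]'(by omega), ?_, ?_⟩
  · rw [mstep, subtreeAt_append, h, hcc]
    show subtreeAt [(childrenL s).length - 1] s = _
    simp [subtreeAt, hget]
  · exact sizeOf_mem_children (List.getElem_mem _)

lemma mpathAux_of_zero {v : List ℕ} {t : PTree} (hc : childCount t v = 0) :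
    ∀ n, mpathAux t n v = v := by
  intro n; cases n with
  | zero => rfl
  | succ m => simp [mpathAux, hc]

lemma prefix_mpathAux (t : PTree) : ∀ n v, v <+: mpathAux t n v := by
  intro n
  induction n with
  | zero => intro v; exact List.prefix_rfl
  | succ m ih =>
    intro v
    by_cases hc : childCount t v = 0
    · simp [mpathAux, hc]
    · have he : mpathAux t (m + 1) v = mpathAux t m (mstep t v) := by
        rw [mpathAux, if_neg hc]
      rw [he]
      exact List.IsPrefix.trans ⟨[childCount t v - 1], rfl⟩ (ih (mstep t v))

lemma prefix_mpath (t : PTree) (v : List ℕ) : v <+: mpath t v :=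
  prefix_mpathAux t _ v

lemma mpathAux_stab {t : PTree} : ∀ n {v s}, subtreeAt v t = some s → sizeOf s ≤ n →
    mpathAux t (n + 1) v = mpathAux t n v := by
  intro n
  induction n with
  | zero =>
    intro v s h hs
    exfalso
    cases s with
    | leaf => simp at hs
    | node a b r => simp at hs
  | succ m ih =>
    intro v s h hs
    by_cases hc : childCount t v = 0
    · rw [mpathAux_of_zero hc, mpathAux_of_zero hc]
    · obtain ⟨c, hcs, hlt⟩ := mstep_subtree h hc
      have he : ∀ j, mpathAux t (j + 1) v = mpathAux t j (mstep t v) := by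
        intro j; rw [mpathAux, if_neg hc]
      rw [show m + 1 + 1 = (m + 1) + 1 from rfl, he (m + 1), he m]
      exact ih hcs (by omega)

lemma mpath_mstep {t : PTree} {v : List ℕ} {s : PTree} (h : subtreeAt v t = some s)
    (hc : childCount t v ≠ 0) : mpath t (mstep t v) = mpath t v := by
  obtain ⟨c, hcs, hlt⟩ := mstep_subtree h hc
  have hst : sizeOf s ≤ sizeOf t := sizeOf_subtree h
  have h1 : 1 ≤ sizeOf t := by cases t <;> simp <;> omega
  obtain ⟨n, hn⟩ : ∃ n, sizeOf t = n + 1 := ⟨sizeOf t - 1, by omega⟩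
  have e1 : mpath t v = mpathAux t n (mstep t v) := by
    rw [mpath, hn, mpathAux, if_neg hc]
  have e2 : mpath t (mstep t v) = mpathAux t n (mstep t v) := by
    rw [mpath, hn]
    exact mpathAux_stab n hcs (by omega)
  rw [e1, e2]

lemma mpath_of_zero {t : PTree} {v : List ℕ} (hc : childCount t v = 0) :
    mpath t v = v := mpathAux_of_zero hc _

lemma mpath_of_between {t : PTree} :
    ∀ k v u, IsVertex t v → u.length ≤ v.length + k → v <+: u → u <+: mpath t v →
      mpath t u = mpath t v := by
  intro k
  induction k with
  | zero =>
    intro v u _ hlen hvu _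
    have : u = v := (List.IsPrefix.eq_of_length hvu
      (le_antisymm hvu.length_le (by omega))).symm
    rw [this]
  | succ m ih =>
    intro v u hv hlen hvu hum
    rcases eq_or_ne u v with rfl | hne
    · rfl
    · have hlt : v.length < u.length := by
        rcases lt_or_eq_of_le hvu.length_le with h | h
        · exact h
        · exact absurd (List.IsPrefix.eq_of_length hvu h).symm hne
      obtain ⟨s, hs⟩ := Option.isSome_iff_exists.mp hv
      by_cases hc : childCount t v = 0
      · exfalso
        rw [mpath_of_zero hc] at hum
        have := hum.length_le
        omega
      · obtain ⟨c, hcs, _⟩ := mstep_subtree hs hc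
        have hmv : mpath t (mstep t v) = mpath t v := mpath_mstep hs hc
        have hmsu : mstep t v <+: u := by
          have h1 : mstep t v <+: mpath t v := by
            rw [← hmv]; exact prefix_mpath t (mstep t v)
          rcases List.prefix_or_prefix_of_prefix h1 hum with h | h
          · exact h
          · have hl : u.length ≤ (mstep t v).length := h.length_le
            have : (mstep t v).length = v.length + 1 := by simp [mstep]
            exact (List.IsPrefix.eq_of_length h (by omega)) ▸ List.prefix_rfl
        have := ih (mstep t v) u (by rw [IsVertex, hcs]; rfl)
          (by simp [mstep]; omega) hmsu (by rw [hmv]; exact hum)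
        rw [this, hmv]

lemma IsSubroot.isVertex {t : PTree} {v : List ℕ} (h : IsSubroot t v) : IsVertex t v := by
  obtain ⟨B, ⟨_, hvert, _, _⟩, _, hvB, _⟩ := h
  exact hvert v hvB

end PTree

open PTree in
/-- **Theorem.** For every finite planar rooted tree `Γ`, the relation `⪯` on the set
of leaves of `Γ` — `l₁ ⪯ l₂` iff `l₁ = l₂` or there is a subroot `v ∈ R(Γ)` with
`l₂ = m(v)` and `l₁ → v` — is a partial order: reflexive, antisymmetric and
transitive. -/
theorem leafLe_is_partial_order (t : PTree) :
    (∀ l, IsLeafV t l → leafLe t l l) ∧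
    (∀ l₁ l₂, IsLeafV t l₁ → IsLeafV t l₂ →
      leafLe t l₁ l₂ → leafLe t l₂ l₁ → l₁ = l₂) ∧
    (∀ l₁ l₂ l₃, IsLeafV t l₁ → IsLeafV t l₂ → IsLeafV t l₃ →
      leafLe t l₁ l₂ → leafLe t l₂ l₃ → leafLe t l₁ l₃) := by
  refine ⟨fun l _ => Or.inl rfl, ?_, ?_⟩
  · -- antisymmetry
    intro l₁ l₂ _ _ h12 h21
    rcases h12 with rfl | ⟨v, hv, rfl, hvl⟩
    · rfl
    rcases h21 with h | ⟨w, hw, hl1, hwl⟩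
    · exact h.symm
    -- l₁ = mpath t w, l₂ = mpath t v, v <+: l₁, w <+: mpath t v
    have hvV := hv.isVertex
    have hwV := hw.isVertex
    have hvm : v <+: mpath t v := prefix_mpath t v
    have hwm : w <+: mpath t w := prefix_mpath t w
    rcases List.prefix_or_prefix_of_prefix hwl hvm with h | h
    · -- w <+: v, and v <+: l₁ = mpath t w
      have hvmw : v <+: mpath t w := hl1 ▸ hvl
      have := mpath_of_between (v.length - w.length) w v hwV (by omega) h hvmw
      rw [hl1, this]
    · -- v <+: w, and w <+: mpath t v
      have := mpath_of_between (w.length - v.length) v w hvV (by omega) h hwl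
      rw [hl1, this]
  · -- transitivity
    intro l₁ l₂ l₃ _ _ _ h12 h23
    rcases h12 with rfl | ⟨v, hv, rfl, hvl⟩
    · exact h23
    rcases h23 with h | ⟨w, hw, rfl, hwl⟩
    · exact Or.inr ⟨v, hv, h.symm, hvl⟩
    -- l₂ = mpath t v, v <+: l₁, l₃ = mpath t w, w <+: mpath t v
    have hvV := hv.isVertex
    have hvm : v <+: mpath t v := prefix_mpath t v
    rcases List.prefix_or_prefix_of_prefix hwl hvm with h | h
    · exact Or.inr ⟨w, hw, rfl, h.trans hvl⟩
    · have := mpath_of_between (w.length - v.length) v w hvV (by omega) h hwl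
      exact Or.inr ⟨v, hv, this, hvl⟩
end

section
/- For every integer n > 0, (1 + n(−1)ⁿ) b_n = −∑_{i=1}^{n−1} (−1)ⁱ b_i b_{n−i}, where b_n = B_n/n!; equivalently, in terms of Bernoulli numbers, (1 + n(−1)ⁿ) B_n = −∑_{i=1}^{n−1} (−1)ⁱ C(n,i) B_i B_{n−i}, where C(n,i) is the binomial coefficient. -/
open PowerSeries Finset

noncomputable def bseq (n : ℕ) : ℚ := bernoulli n / n.factorial

lemma bern_odd_zero {n : ℕ} (h : Odd n) (h1 : 1 < n) : bernoulli n = 0 := by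
  rw [bernoulli_eq_bernoulli'_of_ne_one (by omega), bernoulli'_eq_zero_of_odd h h1]

lemma factA (n : ℕ) : (-1 : ℚ) ^ n * bseq n = bseq n + (if n = 1 then 1 else 0) := by
  rcases Nat.even_or_odd n with he | ho
  · rw [he.neg_one_pow]
    have : n ≠ 1 := by rintro rfl; exact (Nat.not_even_iff_odd.2 (by norm_num)) he
    simp [this]
  · rcases eq_or_lt_of_le (Nat.succ_le_of_lt ho.pos) with h1 | h1
    · have : n = 1 := h1.symm
      subst this
      simp [bseq, bernoulli_one]
      norm_num
    · have : bseq n = 0 := by simp [bseq, bern_odd_zero ho h1]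
      have hn1 : n ≠ 1 := by omega
      simp [this, hn1]

lemma coeff_bps (n : ℕ) : coeff n (bernoulliPowerSeries ℚ) = bseq n := by
  simp [bernoulliPowerSeries, bseq]

lemma derivative_exp : d⁄dX ℚ (exp ℚ) = exp ℚ := by
  ext n
  rw [coeff_derivative, coeff_exp, coeff_exp]
  simp only [Algebra.algebraMap_self, map_one, RingHom.id_apply]
  rw [Nat.factorial_succ]
  have h1 : ((n+1 : ℕ) : ℚ) ≠ 0 := by positivity
  have h2 : ((n.factorial : ℚ)) ≠ 0 := by exact_mod_cast n.factorial_ne_zero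
  field_simp
  push_cast
  ring

lemma key_series :
    (X : ℚ⟦X⟧) * (d⁄dX ℚ (bernoulliPowerSeries ℚ) : ℚ⟦X⟧)
      + bernoulliPowerSeries ℚ * bernoulliPowerSeries ℚ
      + X * bernoulliPowerSeries ℚ = bernoulliPowerSeries ℚ := by
  set B := bernoulliPowerSeries ℚ with hBdef
  have h : B * (exp ℚ - 1) = X := bernoulliPowerSeries_mul_exp_sub_one ℚ
  have h2 : (d⁄dX ℚ B) * (exp ℚ - 1) + B * exp ℚ = 1 := by
    have := congrArg (d⁄dX ℚ) h
    rw [Derivation.leibniz, derivative_X] at this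
    rw [map_sub, _root_.derivative_exp] at this
    simp only [smul_eq_mul, Derivation.map_one_eq_zero, sub_zero] at this
    linear_combination this
  linear_combination B * h2 - (d⁄dX ℚ B + B) * h

lemma fact2 (m : ℕ) :
    bseq (m+1) * (m+1) + ∑ k ∈ Finset.range (m+2), bseq k * bseq (m+1-k) + bseq m
      = bseq (m+1) := by
  have h := congrArg (coeff (R := ℚ) (m+1)) key_series
  rw [map_add, map_add, coeff_succ_X_mul, coeff_succ_X_mul, coeff_derivative, coeff_mul,
    Finset.Nat.sum_antidiagonal_eq_sum_range_succ_mk] at h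
  simp only [coeff_bps] at h
  convert h using 3 with k hk

/-- **Theorem.** For every `n > 0`,
`(1 + n(−1)ⁿ) b_n = −∑_{i=1}^{n−1} (−1)ⁱ b_i b_{n−i}` where `b_n = B_n/n!`;
equivalently, `(1 + n(−1)ⁿ) B_n = −∑_{i=1}^{n−1} (−1)ⁱ C(n,i) B_i B_{n−i}`. -/
theorem bernoulli_quadratic_relation (n : ℕ) (hn : 0 < n) :
    (1 + (n : ℚ) * (-1) ^ n) * bseq n =
      - ∑ i ∈ Finset.Ico 1 n, (-1 : ℚ) ^ i * bseq i * bseq (n - i) ∧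
    (1 + (n : ℚ) * (-1) ^ n) * bernoulli n =
      - ∑ i ∈ Finset.Ico 1 n, (-1 : ℚ) ^ i * (n.choose i : ℚ) * bernoulli i * bernoulli (n - i) := by
  have hfac : (n.factorial : ℚ) ≠ 0 := by exact_mod_cast n.factorial_ne_zero
  have h1 : (1 + (n : ℚ) * (-1) ^ n) * bseq n =
      - ∑ i ∈ Finset.Ico 1 n, (-1 : ℚ) ^ i * bseq i * bseq (n - i) := by
    have hT : ∑ i ∈ Finset.range (n+1), (-1 : ℚ) ^ i * bseq i * bseq (n - i)
        = ∑ i ∈ Finset.range (n+1), bseq i * bseq (n - i) + bseq (n-1) := by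
      have hterm : ∀ i, (-1 : ℚ) ^ i * bseq i * bseq (n - i)
          = bseq i * bseq (n - i) + (if i = 1 then bseq (n-1) else 0) := by
        intro i
        rw [factA i, add_mul]
        congr 1
        by_cases hi : i = 1 <;> simp [hi]
      rw [Finset.sum_congr rfl (fun i _ => hterm i), Finset.sum_add_distrib,
        Finset.sum_ite_eq' (Finset.range (n+1)) 1 (fun _ => bseq (n-1))]
      simp [Finset.mem_range, hn]
    have hU : ∑ i ∈ Finset.range (n+1), bseq i * bseq (n - i)
        = bseq n - (n : ℚ) * bseq n - bseq (n-1) := by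
      obtain ⟨m, rfl⟩ := Nat.exists_eq_add_of_lt hn
      simp only [Nat.zero_add] at *
      have := fact2 m
      push_cast at this ⊢
      simp only [Nat.add_sub_cancel] at *
      linarith [this]
    have hsplit : ∑ i ∈ Finset.range (n+1), (-1 : ℚ) ^ i * bseq i * bseq (n - i)
        = bseq n + (∑ i ∈ Finset.Ico 1 n, (-1 : ℚ) ^ i * bseq i * bseq (n - i))
          + (-1 : ℚ) ^ n * bseq n := by
      rw [Finset.range_eq_Ico, Finset.sum_eq_sum_Ico_succ_bot (by omega : 0 < n + 1),
        Finset.sum_Ico_succ_top (by omega : 1 ≤ n)]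
      simp [bseq]
      ring
    by_cases h1 : n = 1
    · subst h1
      simp [bseq, bernoulli_one]
    · have hA : (-1 : ℚ) ^ n * bseq n = bseq n := by
        have := factA n
        simpa [h1] using this
      rw [hsplit, hU] at hT
      nlinarith [hT, hA]
  refine ⟨h1, ?_⟩
  have hb : bseq n * (n.factorial : ℚ) = bernoulli n := div_mul_cancel₀ _ hfac
  have h2 : ∀ i ∈ Finset.Ico 1 n, (-1 : ℚ) ^ i * bseq i * bseq (n - i) * (n.factorial : ℚ)
      = (-1 : ℚ) ^ i * (n.choose i : ℚ) * bernoulli i * bernoulli (n - i) := by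
    intro i hi
    obtain ⟨hi1, hi2⟩ := Finset.mem_Ico.1 hi
    rw [Nat.cast_choose ℚ hi2.le]
    have hf1 : (i.factorial : ℚ) ≠ 0 := by exact_mod_cast i.factorial_ne_zero
    have hf2 : ((n - i).factorial : ℚ) ≠ 0 := by exact_mod_cast (n - i).factorial_ne_zero
    simp only [bseq]
    field_simp
  calc (1 + (n : ℚ) * (-1) ^ n) * bernoulli n
      = ((1 + (n : ℚ) * (-1) ^ n) * bseq n) * (n.factorial : ℚ) := by rw [mul_assoc, hb]
    _ = (- ∑ i ∈ Finset.Ico 1 n, (-1 : ℚ) ^ i * bseq i * bseq (n - i)) * (n.factorial : ℚ) := by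
        rw [h1]
    _ = - ∑ i ∈ Finset.Ico 1 n, (-1 : ℚ) ^ i * (n.choose i : ℚ) * bernoulli i * bernoulli (n - i) := by
        rw [neg_mul, Finset.sum_mul, neg_inj]
        exact Finset.sum_congr rfl h2
end
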